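/- arXiv:2202.09117 — 3 statements merged into one kernel-verified Lean document; each statement's English description precedes it below -/
import Mathlib

section
/- For every nonempty finite sequence (a_1, …, a_r) of integers with a_i ≥ 2 for all i, there exists a unique nonempty finite sequence (b_1, …, b_s) of integers with b_j ≥ 2 for all j such that 1/[a_1, …, a_r] + 1/[b_1, …, b_s] = 1. (The sequence (b_1, …, b_s) is called the dual string of (a_1, …, a_r); equivalently, if p/q = [a_1, …, a_r] for coprime p > q ≥ 1, then p/(p−q) = [b_1, …, b_s].) -/
/-- Hirzebruch–Jung continued fraction of a nonempty list of rationals: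
`hjCF [a] = a` and `hjCF (a :: rest) = a - 1 / hjCF rest`. -/
def hjCF : List ℚ → ℚ
  | [] => 0
  | [a] => a
  | a :: b :: t => a - 1 / hjCF (b :: t)

/-- Hirzebruch–Jung continued fraction of a list of integers. -/
def hjCFZ (l : List ℤ) : ℚ := hjCF (l.map (fun n => (n : ℚ)))

/-!
The continued fraction `hjCFZ` is a bijection from the nonempty strings of integers `≥ 2` onto
the rationals `> 1`. A string `a :: t` has value in `(a - 1, a]`, with equality only for `t = []`,
so its first entry is the ceiling of its value and its tail is the string of `1 / (a - x)`;
this gives injectivity, and surjectivity by strong induction on the denominator, which drops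
when passing from `x` to `1 / (⌈x⌉ - x)` because `0 < ⌈x⌉ - x < 1`. The dual string of `l` is
then the unique string with value `x / (x - 1)`, where `x = hjCFZ l`.
-/

def hjStrings : Set (List ℤ) := {l | l ≠ [] ∧ ∀ a ∈ l, 2 ≤ a}

theorem Rat.den_inv_lt_den {r : ℚ} (h0 : 0 < r) (h1 : r < 1) : r⁻¹.den < r.den := by
  have hnum : r.num < r.den := by
    rw [← Rat.num_div_den r, div_lt_one (by positivity)] at h1
    exact_mod_cast h1
  have : 0 < r.num := Rat.num_pos.2 h0
  rw [Rat.den_inv_of_ne_zero h0.ne']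
  omega

theorem one_div_add_one_div_eq_one_iff {K : Type*} [Field K] {x y : K} (hx0 : x ≠ 0)
    (hx1 : x ≠ 1) : 1 / x + 1 / y = 1 ↔ y = x / (x - 1) := by
  have hx1' : x - 1 ≠ 0 := sub_ne_zero.2 hx1
  rcases eq_or_ne y 0 with rfl | hy
  · simpa [hx1] using (div_ne_zero hx0 hx1').symm
  · field_simp
    constructor <;> intro h <;> linear_combination -h

theorem hjCFZ_singleton (a : ℤ) : hjCFZ [a] = a := rfl

theorem hjCFZ_cons (a : ℤ) {t : List ℤ} (ht : t ≠ []) : hjCFZ (a :: t) = a - 1 / hjCFZ t := by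
  obtain ⟨b, t, rfl⟩ := List.exists_cons_of_ne_nil ht
  rfl

theorem hjCFZ_cons_mem_Ioo (a : ℤ) {t : List ℤ} (ht : t ≠ []) (h : 1 < hjCFZ t) :
    hjCFZ (a :: t) ∈ Set.Ioo ((a : ℚ) - 1) a := by
  have h0 : 0 < 1 / hjCFZ t := by positivity
  have h1 : 1 / hjCFZ t < 1 := (div_lt_one (by positivity)).2 h
  rw [hjCFZ_cons a ht]
  constructor <;> linarith

theorem hjCFZ_mapsTo : Set.MapsTo hjCFZ hjStrings (Set.Ioi 1) := by
  rintro l ⟨hne, h2⟩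
  induction l with
  | nil => exact absurd rfl hne
  | cons a t ih =>
    obtain ⟨ha, ht2⟩ := List.forall_mem_cons.1 h2
    have ha' : (2 : ℚ) ≤ a := by exact_mod_cast ha
    rcases eq_or_ne t [] with rfl | ht
    · rw [Set.mem_Ioi, hjCFZ_singleton]
      linarith
    · have := (hjCFZ_cons_mem_Ioo a ht (ih ht ht2)).1
      rw [Set.mem_Ioi]
      linarith

theorem ceil_hjCFZ_cons (a : ℤ) {t : List ℤ} (ht : ∀ b ∈ t, 2 ≤ b) : ⌈hjCFZ (a :: t)⌉ = a := by
  rcases eq_or_ne t [] with rfl | ht'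
  · exact Int.ceil_intCast a
  · have h := hjCFZ_cons_mem_Ioo a ht' (hjCFZ_mapsTo ⟨ht', ht⟩)
    exact Int.ceil_eq_iff.2 ⟨h.1, h.2.le⟩

theorem hjCFZ_injOn : Set.InjOn hjCFZ hjStrings := by
  intro l hl m hm heq
  induction l generalizing m with
  | nil => exact absurd rfl hl.1
  | cons a t ih =>
    obtain ⟨b, s, rfl⟩ := List.exists_cons_of_ne_nil hm.1
    have ht2 := (List.forall_mem_cons.1 hl.2).2
    have hs2 := (List.forall_mem_cons.1 hm.2).2
    obtain rfl : a = b := by rw [← ceil_hjCFZ_cons a ht2, heq, ceil_hjCFZ_cons b hs2]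
    rcases eq_or_ne t [] with rfl | ht <;> rcases eq_or_ne s [] with rfl | hs
    · rfl
    · exact absurd heq.symm (hjCFZ_cons_mem_Ioo a hs (hjCFZ_mapsTo ⟨hs, hs2⟩)).2.ne
    · exact absurd heq (hjCFZ_cons_mem_Ioo a ht (hjCFZ_mapsTo ⟨ht, ht2⟩)).2.ne
    · rw [hjCFZ_cons a ht, hjCFZ_cons a hs, sub_right_inj, one_div, one_div, inv_inj] at heq
      rw [ih ⟨ht, ht2⟩ ⟨hs, hs2⟩ heq]

theorem hjCFZ_surjOn : Set.SurjOn hjCFZ hjStrings (Set.Ioi 1) := by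
  intro q hq
  induction hd : q.den using Nat.strong_induction_on generalizing q with
  | _ n ih =>
  set a := ⌈q⌉
  have ha : 2 ≤ a := Int.lt_ceil.2 (by exact_mod_cast Set.mem_Ioi.1 hq : ((1 : ℤ) : ℚ) < q)
  by_cases hqa : (a : ℚ) = q
  · exact ⟨[a], ⟨List.cons_ne_nil _ _, by simpa using ha⟩, hqa⟩
  set r := (a : ℚ) - q
  have hr0 : 0 < r := sub_pos.2 ((Int.le_ceil q).lt_of_ne' hqa)
  have hr1 : r < 1 := by linarith [Int.ceil_lt_add_one q]
  have hden : r⁻¹.den < n := hd ▸ Rat.intCast_sub_den a q ▸ Rat.den_inv_lt_den hr0 hr1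
  obtain ⟨m, hm, hmr⟩ := ih _ hden (one_lt_inv₀ hr0 |>.2 hr1) rfl
  refine ⟨a :: m, ⟨List.cons_ne_nil _ _, List.forall_mem_cons.2 ⟨ha, hm.2⟩⟩, ?_⟩
  rw [hjCFZ_cons a hm.1, hmr, one_div, inv_inv]
  ring

/-- Every nonempty string `(a_1, …, a_r)` of integers `≥ 2` has a unique dual string
`(b_1, …, b_s)` of integers `≥ 2`, characterized by
`1/[a_1, …, a_r] + 1/[b_1, …, b_s] = 1`. -/
theorem hjCF_dual_exists_unique (l : List ℤ) (hne : l ≠ []) (h2 : ∀ a ∈ l, 2 ≤ a) :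
    ∃! m : List ℤ, m ≠ [] ∧ (∀ b ∈ m, 2 ≤ b) ∧ 1 / hjCFZ l + 1 / hjCFZ m = 1 := by
  have hx : 1 < hjCFZ l := hjCFZ_mapsTo ⟨hne, h2⟩
  have dual_iff := fun y ↦
    one_div_add_one_div_eq_one_iff (y := y) (zero_lt_one.trans hx).ne' hx.ne'
  have hdual : 1 < hjCFZ l / (hjCFZ l - 1) :=
    (one_lt_div (sub_pos.2 hx)).2 (sub_lt_self _ one_pos)
  obtain ⟨m, ⟨hmne, hm2⟩, hm⟩ := hjCFZ_surjOn hdual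
  refine ⟨m, ⟨hmne, hm2, (dual_iff _).2 hm⟩, fun m' ⟨hne', h2', hsum⟩ => ?_⟩
  exact hjCFZ_injOn ⟨hne', h2'⟩ ⟨hmne, hm2⟩ (((dual_iff _).1 hsum).trans hm.symm)
end

section
/- Let M be any blowup matrix, i.e. a k×(k−1) matrix with entries in {0,1} obtained from the initial 2×1 matrix with rows (0), (1) by a finite sequence of exterior and interior matrix blowups. Let v_1, …, v_k denote the rows of M read from bottom to top (v_i is the (k+1−i)-th row of M). Then ⟨v_i, v_j⟩ = ⟨v_i, v_i⟩ − 1 for all 1 ≤ i < j ≤ k, i.e. the row-reversal of M is a CQS matrix. -/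
/-- Standard inner product of two integer vectors given as lists. -/
def innerL (v w : List ℤ) : ℤ := (List.zipWith (· * ·) v w).sum

/-- A matrix, given as its list of rows `v_1, …, v_r` (top to bottom), is a CQS matrix if
`r ≥ 2` and `⟨v_i, v_j⟩ = ⟨v_i, v_i⟩ - 1` for all `1 ≤ i < j ≤ r`. -/
def IsCQS (rows : List (List ℤ)) : Prop :=
  2 ≤ rows.length ∧
    ∀ i j : ℕ, i < j → j < rows.length →
      innerL (rows.getD i []) (rows.getD j []) = innerL (rows.getD i []) (rows.getD i []) - 1

/-- Append the entries of `col` to the corresponding rows, i.e. append a column. -/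
def rowAppendCol (rows : List (List ℤ)) (col : List ℤ) : List (List ℤ) :=
  List.zipWith (fun r c => r ++ [c]) rows col

/-- Exterior matrix blowup: keep `M` as the top-left block; the new last row is zero except
for a `1` in its last entry. -/
def exteriorMB (M : List (List ℤ)) : List (List ℤ) :=
  M.map (fun row => row ++ [0]) ++ [List.replicate (M.length - 1) 0 ++ [1]]

/-- Interior matrix blowup at the `i`-th term (`1 ≤ i ≤ r - 1`): insert immediately below the
`(i+1)`-st row a copy of the `(i+1)`-st row, then append a last column whose `j`-th entry is
`1` for `1 ≤ j ≤ i`, `0` for `j = i+1`, `1` for `j = i+2`, and `0` for `j > i+2`. -/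
def interiorMB (M : List (List ℤ)) (i : ℕ) : List (List ℤ) :=
  rowAppendCol (M.take (i + 1) ++ [M.getD i []] ++ M.drop (i + 1))
    (List.replicate i 1 ++ [0, 1] ++ List.replicate (M.length - i - 1) 0)

/-- Blowup matrices: obtained from the initial `2 × 1` matrix with rows `(0)`, `(1)` by a
finite sequence of exterior and interior matrix blowups. -/
inductive IsBlowupMatrix : List (List ℤ) → Prop
  | base : IsBlowupMatrix [[0], [1]]
  | exterior : ∀ M : List (List ℤ), IsBlowupMatrix M → IsBlowupMatrix (exteriorMB M)
  | interior : ∀ (M : List (List ℤ)) (i : ℕ), 1 ≤ i → i < M.length →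
      IsBlowupMatrix M → IsBlowupMatrix (interiorMB M i)

/-!
Read from bottom to top, a matrix is CQS when every row `v` and every row `w` above it satisfy
`⟨v, w⟩ = ⟨v, v⟩ - 1`, a pairwise condition on the rows of `M`. Appending an entry `a` to `v`
and `b` to `w` adds `a * b` to the left side and `a * a` to the right, so the condition survives
whenever `a * b = a * a`. In an exterior blowup this covers all old pairs, and the new bottom row
`(0, …, 0, 1)` is orthogonal to the old rows and has square norm `1`. In an interior blowup it
covers every pair except the two copies of the duplicated row `x`, where `⟨x, x⟩ = ⟨x, x⟩ - 1`
fails by one and the appended entries `0` (upper copy) and `1` (lower copy) repair it.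
-/

lemma innerL_append_singleton {v w : List ℤ} (h : v.length = w.length) (a b : ℤ) :
    innerL (v ++ [a]) (w ++ [b]) = innerL v w + a * b := by
  simp [innerL, List.zipWith_append h]

lemma innerL_replicate_zero_left (n : ℕ) (v : List ℤ) : innerL (List.replicate n 0) v = 0 := by
  induction n generalizing v with
  | zero => simp [innerL]
  | succ n ih =>
    cases v with
    | nil => simp [innerL]
    | cons a v => simpa [innerL, List.replicate_succ] using ih v

def IsCQSPair (v w : List ℤ) : Prop := innerL v w = innerL v v - 1

lemma isCQS_iff_pairwise (rows : List (List ℤ)) :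
    IsCQS rows ↔ 2 ≤ rows.length ∧ rows.Pairwise IsCQSPair := by
  simp only [IsCQS, IsCQSPair, List.pairwise_iff_getElem]
  refine and_congr_right fun _ => ⟨fun h i j hi hj hij => ?_, fun h i j hij hj => ?_⟩
  · simpa [List.getElem?_eq_getElem hi, List.getElem?_eq_getElem hj] using h i j hij hj
  · simpa [List.getElem?_eq_getElem (hij.trans hj), List.getElem?_eq_getElem hj]
      using h i j (hij.trans hj) hj hij

lemma isCQSPair_append_singleton_iff {v w : List ℤ} (h : v.length = w.length) {a b : ℤ}
    (hab : a * b = a * a) : IsCQSPair (v ++ [a]) (w ++ [b]) ↔ IsCQSPair v w := by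
  simp only [IsCQSPair, innerL_append_singleton h, innerL_append_singleton rfl, hab]
  constructor <;> intro <;> linarith

lemma rowAppendCol_append {rows rows' : List (List ℤ)} {col col' : List ℤ}
    (h : rows.length = col.length) :
    rowAppendCol (rows ++ rows') (col ++ col') = rowAppendCol rows col ++ rowAppendCol rows' col' :=
  List.zipWith_append h

lemma rowAppendCol_replicate (rows : List (List ℤ)) (c : ℤ) :
    rowAppendCol rows (List.replicate rows.length c) = rows.map (· ++ [c]) := by
  induction rows with
  | nil => rfl
  | cons r rows ih => simpa [rowAppendCol, List.replicate_succ] using ih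

lemma interiorMB_append_cons (A B : List (List ℤ)) (x : List ℤ) :
    interiorMB (A ++ x :: B) A.length =
      A.map (· ++ [1]) ++ [x ++ [0], x ++ [1]] ++ B.map (· ++ [0]) := by
  have hrows : (A ++ x :: B).take (A.length + 1) ++ [(A ++ x :: B).getD A.length []] ++
      (A ++ x :: B).drop (A.length + 1) = A ++ [x, x] ++ B := by simp [List.take_append]
  have hcol : (A ++ x :: B).length - A.length - 1 = B.length := by simp
  rw [interiorMB, hrows, hcol, rowAppendCol_append (by simp), rowAppendCol_append (by simp),
    rowAppendCol_replicate, rowAppendCol_replicate]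
  rfl

section Exterior

variable {M : List (List ℤ)}

lemma length_exteriorMB (M : List (List ℤ)) : (exteriorMB M).length = M.length + 1 := by
  simp [exteriorMB]

lemma length_add_one_of_mem_exteriorMB (h0 : 0 < M.length)
    (hM : ∀ r ∈ M, r.length + 1 = M.length) :
    ∀ r ∈ exteriorMB M, r.length + 1 = (exteriorMB M).length := by
  rw [length_exteriorMB]
  simp only [exteriorMB, List.mem_append, List.mem_map, List.mem_singleton]
  rintro _ (⟨r, hr, rfl⟩ | rfl)
  · simp [hM r hr]
  · simp only [List.length_append, List.length_replicate, List.length_singleton]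
    omega

lemma pairwise_exteriorMB (hM : ∀ r ∈ M, r.length + 1 = M.length)
    (hp : M.Pairwise (flip IsCQSPair)) : (exteriorMB M).Pairwise (flip IsCQSPair) := by
  simp only [exteriorMB, List.pairwise_append, List.pairwise_map, List.pairwise_singleton,
    List.mem_map, List.mem_singleton]
  refine ⟨hp.imp_of_mem fun ha hb h => ?_, trivial, ?_⟩
  · exact (isCQSPair_append_singleton_iff (by linarith [hM _ ha, hM _ hb]) (by ring)).2 h
  · rintro _ ⟨r, hr, rfl⟩ _ rfl
    have hlen : (List.replicate (M.length - 1) (0 : ℤ)).length = r.length := by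
      have := hM r hr
      simp; omega
    simp only [flip, IsCQSPair, innerL_append_singleton hlen, innerL_append_singleton rfl,
      innerL_replicate_zero_left]
    norm_num

end Exterior

section Interior

variable {A B : List (List ℤ)} {x : List ℤ}

lemma length_add_one_of_mem_interiorMB
    (hM : ∀ r ∈ A ++ x :: B, r.length + 1 = (A ++ x :: B).length) :
    ∀ r ∈ interiorMB (A ++ x :: B) A.length,
      r.length + 1 = (interiorMB (A ++ x :: B) A.length).length := by
  have hlen : ∀ r ∈ A ++ x :: B, r.length = A.length + B.length := fun r hr => by
    have := hM r hr
    simp only [List.length_append, List.length_cons] at this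
    omega
  rw [interiorMB_append_cons]
  simp only [List.length_append, List.length_map, List.length_cons, List.length_nil,
    List.mem_append, List.mem_map, List.mem_cons, List.not_mem_nil, or_false]
  rintro _ ((⟨r, hr, rfl⟩ | rfl | rfl) | ⟨r, hr, rfl⟩) <;>
    (simp [*]; omega)

lemma pairwise_interiorMB (hw : ∀ r ∈ A ++ x :: B, r.length = x.length)
    (hp : (A ++ x :: B).Pairwise (flip IsCQSPair)) :
    (interiorMB (A ++ x :: B) A.length).Pairwise (flip IsCQSPair) := by
  rw [interiorMB_append_cons]
  simp only [List.pairwise_append, List.pairwise_cons, List.pairwise_map, List.mem_map,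
    List.mem_append, List.mem_cons, List.not_mem_nil, or_false, List.Pairwise.nil,
    forall_exists_index, and_imp, forall_apply_eq_imp_iff₂, or_imp, forall_and, forall_eq,
    IsEmpty.forall_iff, implies_true, true_and, and_true] at hw hp ⊢
  obtain ⟨hwA, hwB⟩ := hw
  obtain ⟨hA, ⟨hxB, hB⟩, hAx, hAB⟩ := hp
  have key {v w : List ℤ} {a b : ℤ} (hv : v.length = x.length) (hw : w.length = x.length)
      (hab : b * a = b * b) : flip IsCQSPair (v ++ [a]) (w ++ [b]) ↔ flip IsCQSPair v w :=
    isCQSPair_append_singleton_iff (hw.trans hv.symm) hab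
  have hx : flip IsCQSPair (x ++ [0]) (x ++ [1]) := by
    simp only [flip, IsCQSPair, innerL_append_singleton rfl]
    ring
  refine ⟨⟨hA.imp_of_mem fun ha hb h => (key (hwA _ ha) (hwA _ hb) (by ring)).2 h, hx,
      fun a ha => (key (hwA a ha) rfl (by ring)).2 (hAx a ha),
      fun a ha => (key (hwA a ha) rfl (by ring)).2 (hAx a ha)⟩,
    hB.imp_of_mem fun ha hb h => (key (hwB _ ha) (hwB _ hb) (by ring)).2 h,
    fun a ha b hb => (key (hwA a ha) (hwB b hb) (by ring)).2 (hAB a ha b hb),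
    fun b hb => (key rfl (hwB b hb) (by ring)).2 (hxB b hb),
    fun b hb => (key rfl (hwB b hb) (by ring)).2 (hxB b hb)⟩

end Interior

namespace IsBlowupMatrix

variable {M : List (List ℤ)}

lemma two_le_length (hM : IsBlowupMatrix M) : 2 ≤ M.length := by
  induction hM with
  | base => simp
  | exterior M _ ih => rw [length_exteriorMB]; omega
  | interior M i _ hi _ ih =>
    obtain ⟨A, x, B, rfl, rfl, -⟩ := List.exists_of_modify id hi
    simp only [interiorMB_append_cons, List.length_append, List.length_map, List.length_cons] at ih ⊢
    omega

lemma rows_length_and_pairwise (hM : IsBlowupMatrix M) :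
    (∀ r ∈ M, r.length + 1 = M.length) ∧ M.Pairwise (flip IsCQSPair) := by
  induction hM with
  | base => simp [flip, IsCQSPair, innerL]
  | exterior M hM ih =>
    have h0 : 0 < M.length := by linarith [hM.two_le_length]
    exact ⟨length_add_one_of_mem_exteriorMB h0 ih.1, pairwise_exteriorMB ih.1 ih.2⟩
  | interior M i _ hi _ ih =>
    obtain ⟨A, x, B, rfl, rfl, -⟩ := List.exists_of_modify id hi
    have hw : ∀ r ∈ A ++ x :: B, r.length = x.length := fun r hr => by
      have := ih.1 x (by simp)
      have := ih.1 r hr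
      omega
    exact ⟨length_add_one_of_mem_interiorMB ih.1, pairwise_interiorMB hw ih.2⟩

end IsBlowupMatrix

/-- For any blowup matrix `M`, the rows of `M` read from bottom to top satisfy
`⟨v_i, v_j⟩ = ⟨v_i, v_i⟩ - 1` for all `i < j`, i.e. the row-reversal of `M` is a
CQS matrix. -/
theorem blowupMatrix_reverse_isCQS (M : List (List ℤ)) (hM : IsBlowupMatrix M) :
    IsCQS M.reverse := by
  rw [isCQS_iff_pairwise, List.length_reverse, List.pairwise_reverse]
  exact ⟨hM.two_le_length, hM.rows_length_and_pairwise.2⟩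
end

section
/- Let M be an r×c matrix with entries in {0,1} (r ≥ 2) whose rows w_1, …, w_r (read from top to bottom) satisfy ⟨w_i, w_j⟩ = ⟨w_i, w_i⟩ − 1 for all 1 ≤ j < i ≤ r (i.e. the row-reversal of M is a CQS matrix). Then for any 1 ≤ s ≤ r, the r×(c+1) matrix obtained from M by appending a column whose first s entries (from the top) are 1 and whose remaining entries are 0 again has the property that its row-reversal is a CQS matrix. -/
lemma length_rowAppendCol {rows : List (List ℤ)} {col : List ℤ}
    (hcol : col.length = rows.length) : (rowAppendCol rows col).length = rows.length := by
  simp [rowAppendCol, hcol]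

lemma getD_rowAppendCol {rows : List (List ℤ)} {col : List ℤ}
    (hcol : col.length = rows.length) {i : ℕ} (hi : i < rows.length) :
    (rowAppendCol rows col).getD i [] = rows.getD i [] ++ [col.getD i 0] := by
  rw [List.getD_eq_getElem _ _ (by rwa [length_rowAppendCol hcol]),
    List.getD_eq_getElem _ _ hi, List.getD_eq_getElem _ _ (by omega)]
  exact List.getElem_zipWith ..

lemma reverse_rowAppendCol {rows : List (List ℤ)} {col : List ℤ}
    (hcol : rows.length = col.length) :
    (rowAppendCol rows col).reverse = rowAppendCol rows.reverse col.reverse :=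
  List.reverse_zipWith hcol

theorem IsCQS.rowAppendCol {rows : List (List ℤ)} {col : List ℤ} {c : ℕ} (h : IsCQS rows)
    (hlen : ∀ row ∈ rows, row.length = c) (hcol : col.length = rows.length)
    (hmul : ∀ i j, i < j → j < rows.length →
      col.getD i 0 * col.getD j 0 = col.getD i 0 * col.getD i 0) :
    IsCQS (rowAppendCol rows col) := by
  obtain ⟨hr, hinner⟩ := h
  rw [IsCQS, length_rowAppendCol hcol]
  refine ⟨hr, fun i j hij hj => ?_⟩
  have hi : i < rows.length := hij.trans hj
  have hlen_getD : ∀ k < rows.length, (rows.getD k []).length = c := fun k hk => by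
    rw [List.getD_eq_getElem _ _ hk]
    exact hlen _ (List.getElem_mem _)
  rw [getD_rowAppendCol hcol hi, getD_rowAppendCol hcol hj,
    innerL_append_singleton (by rw [hlen_getD i hi, hlen_getD j hj]),
    innerL_append_singleton rfl, hinner i j hij hj, hmul i j hij hj]
  ring

lemma getD_replicate_zero_append_replicate_one {a b i : ℕ} (hi : i < a + b) :
    (List.replicate a (0 : ℤ) ++ List.replicate b 1).getD i 0 = if a ≤ i then 1 else 0 := by
  split_ifs with ha
  · rw [List.getD_append_right _ _ _ _ (by simpa using ha)]
    simp [List.getD_eq_getElem?_getD, show i - a < b by omega]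
  · rw [List.getD_append _ _ _ _ (by simp; omega)]
    simp [List.getD_eq_getElem?_getD]

lemma replicate_zero_append_replicate_one_getD_mul {a b i j : ℕ} (hij : i < j)
    (hj : j < a + b) :
    (List.replicate a (0 : ℤ) ++ List.replicate b 1).getD i 0 *
        (List.replicate a (0 : ℤ) ++ List.replicate b 1).getD j 0 =
      (List.replicate a (0 : ℤ) ++ List.replicate b 1).getD i 0 *
        (List.replicate a (0 : ℤ) ++ List.replicate b 1).getD i 0 := by
  rw [getD_replicate_zero_append_replicate_one hj,
    getD_replicate_zero_append_replicate_one (hij.trans hj)]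
  split_ifs <;> first | rfl | omega

theorem appendCol_reverse_isCQS_general (M : List (List ℤ)) (c : ℕ)
    (hlen : ∀ row ∈ M, row.length = c)
    (hcqs : IsCQS M.reverse)
    (s : ℕ) (hs2 : s ≤ M.length) :
    IsCQS (rowAppendCol M (List.replicate s 1 ++ List.replicate (M.length - s) 0)).reverse := by
  rw [reverse_rowAppendCol (by simp; omega), List.reverse_append, List.reverse_replicate,
    List.reverse_replicate]
  refine hcqs.rowAppendCol (c := c) (by simpa using hlen) (by simp; omega) fun i j hij hj => ?_
  exact replicate_zero_append_replicate_one_getD_mul hij (by simp at hj; omega)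

/-- Let `M` be an `r × c` matrix with entries in `{0,1}` (`r ≥ 2`) whose row-reversal is a
CQS matrix. Then for any `1 ≤ s ≤ r`, appending to `M` the column whose first `s` entries
(from the top) are `1` and whose remaining entries are `0` again yields a matrix whose
row-reversal is a CQS matrix. -/
theorem appendCol_reverse_isCQS (M : List (List ℤ)) (c : ℕ) (hr : 2 ≤ M.length)
    (hlen : ∀ row ∈ M, row.length = c)
    (h01 : ∀ row ∈ M, ∀ x ∈ row, x = 0 ∨ x = 1)
    (hcqs : IsCQS M.reverse)
    (s : ℕ) (hs1 : 1 ≤ s) (hs2 : s ≤ M.length) :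
    IsCQS (rowAppendCol M (List.replicate s 1 ++ List.replicate (M.length - s) 0)).reverse :=
  appendCol_reverse_isCQS_general M c hlen hcqs s hs2
end
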